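/- arXiv:1805.10166 — 2 statements merged into one kernel-verified Lean document; each statement's English description precedes it below -/
import Mathlib

section
/- For p > 4 the integral ∫₀^∞ [ ∫_ℝ ( (1+v)^{-1/2} e^{−z²/(4(1+v))} − v^{-1/2} e^{−z²/(4v)} )² dz ]^{p/(p−2)} dv is finite. -/
/-!
Expanding the square reduces the inner integral to three Gaussian integrals,
`∫ gaussProfile a · gaussProfile b = 2√π (a + b)^(-1/2)`, so for `v > 0` it equals
`2√π S(2v)` with `S(x) = x^(-1/2) - 2 (x + 1)^(-1/2) + (x + 2)^(-1/2)`. As a second difference of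
`x^(-1/2)`, `S(x)` is `O(x^(-1/2))` near `0` and `O(x^(-3/2))` at infinity, so the `q`-th power
with `q = p/(p-2)` is integrable on `(0, ∞)` as soon as `q/2 < 1 < 3q/2`, that is, for `p > 4`.
-/

open MeasureTheory Real Set

lemma integrableOn_Ioi_zero_of_le_rpow {E : Type*} [NormedAddCommGroup E] {g : ℝ → E}
    {a b C₀ C₁ : ℝ} (hg : AEStronglyMeasurable g (volume.restrict (Ioi 0))) (ha : -1 < a)
    (hb : b < -1) (h₀ : ∀ v ∈ Ioc 0 1, ‖g v‖ ≤ C₀ * v ^ a)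
    (h₁ : ∀ v ∈ Ioi 1, ‖g v‖ ≤ C₁ * v ^ b) :
    IntegrableOn g (Ioi 0) := by
  rw [← Ioc_union_Ioi_eq_Ioi zero_le_one]
  refine IntegrableOn.union ?_ ?_
  · refine Integrable.mono' (((intervalIntegral.intervalIntegrable_rpow' ha).1).const_mul C₀)
      (hg.mono_set Ioc_subset_Ioi_self) ?_
    filter_upwards [ae_restrict_mem measurableSet_Ioc] using h₀
  · refine Integrable.mono' ((integrableOn_Ioi_rpow_of_lt hb one_pos).const_mul C₁)
      (hg.mono_set (Ioi_subset_Ioi zero_le_one)) ?_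
    filter_upwards [ae_restrict_mem measurableSet_Ioi] using h₁

lemma norm_rpow_le_mul_rpow {x C v a q : ℝ} (hv : 0 < v) (hq : 0 ≤ q)
    (hx : |x| ≤ C * v ^ a) : ‖x ^ q‖ ≤ C ^ q * v ^ (a * q) := by
  have hC : 0 ≤ C :=
    (mul_nonneg_iff_of_pos_right (rpow_pos_of_pos hv a)).mp ((abs_nonneg x).trans hx)
  calc ‖x ^ q‖ ≤ |x| ^ q := abs_rpow_le_abs_rpow x q
    _ ≤ (C * v ^ a) ^ q := rpow_le_rpow (abs_nonneg x) hx hq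
    _ = C ^ q * v ^ (a * q) := by rw [mul_rpow hC (by positivity), rpow_mul hv.le]

lemma rpow_neg_one_half_eq_inv_sqrt {x : ℝ} (hx : 0 ≤ x) : x ^ (-(1:ℝ)/2) = (√x)⁻¹ := by
  rw [sqrt_eq_rpow, ← rpow_neg hx]
  norm_num

lemma rpow_neg_three_halves_eq {x : ℝ} (hx : 0 ≤ x) :
    x ^ (-(3:ℝ)/2) = (x ^ (-(1:ℝ)/2)) ^ 3 := by
  rw [← rpow_mul_natCast hx]
  norm_num

lemma rpow_neg_one_half_sub_add_one_le {x : ℝ} (hx : 0 < x) :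
    x ^ (-(1:ℝ)/2) - (x + 1) ^ (-(1:ℝ)/2) ≤ x ^ (-(3:ℝ)/2) / 2 := by
  rw [rpow_neg_three_halves_eq hx.le, rpow_neg_one_half_eq_inv_sqrt hx.le,
    rpow_neg_one_half_eq_inv_sqrt (by linarith)]
  have hs : 0 < √x := sqrt_pos.mpr hx
  have hst : √x ≤ √(x + 1) := sqrt_le_sqrt (by linarith)
  have ht : 0 < √(x + 1) := hs.trans_le hst
  have hdiff : √(x + 1) ^ 2 - √x ^ 2 = 1 := by
    rw [sq_sqrt hx.le, sq_sqrt (by linarith)]; ring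
  calc (√x)⁻¹ - (√(x + 1))⁻¹ = 1 / (√x * √(x + 1) * (√x + √(x + 1))) := by
        field_simp
        linear_combination hdiff
    _ ≤ 1 / (√x * √x * (√x + √x)) := by gcongr
    _ = (√x)⁻¹ ^ 3 / 2 := by field_simp; ring

lemma abs_rpow_neg_one_half_secondDiff_le {x : ℝ} (hx : 0 < x) :
    |x ^ (-(1:ℝ)/2) - 2 * (x + 1) ^ (-(1:ℝ)/2) + (x + 2) ^ (-(1:ℝ)/2)|
      ≤ 2 * x ^ (-(1:ℝ)/2) := by
  have hm0 : (x + 1) ^ (-(1:ℝ)/2) ≤ x ^ (-(1:ℝ)/2) :=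
    rpow_le_rpow_of_nonpos hx (by linarith) (by norm_num)
  have hm1 : (x + 2) ^ (-(1:ℝ)/2) ≤ (x + 1) ^ (-(1:ℝ)/2) :=
    rpow_le_rpow_of_nonpos (by linarith) (by linarith) (by norm_num)
  have hm2 : 0 ≤ (x + 2) ^ (-(1:ℝ)/2) := by positivity
  rw [abs_le]
  constructor <;> linarith

lemma abs_rpow_neg_one_half_secondDiff_le_rpow_neg_three_halves {x : ℝ} (hx : 0 < x) :
    |x ^ (-(1:ℝ)/2) - 2 * (x + 1) ^ (-(1:ℝ)/2) + (x + 2) ^ (-(1:ℝ)/2)|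
      ≤ x ^ (-(3:ℝ)/2) / 2 := by
  have h0 := rpow_neg_one_half_sub_add_one_le hx
  have h1 := rpow_neg_one_half_sub_add_one_le (x := x + 1) (by linarith)
  have hm0 : (x + 1) ^ (-(1:ℝ)/2) ≤ x ^ (-(1:ℝ)/2) :=
    rpow_le_rpow_of_nonpos hx (by linarith) (by norm_num)
  have hm1 : (x + 2) ^ (-(1:ℝ)/2) ≤ (x + 1) ^ (-(1:ℝ)/2) :=
    rpow_le_rpow_of_nonpos (by linarith) (by linarith) (by norm_num)
  have hm3 : (x + 1) ^ (-(3:ℝ)/2) ≤ x ^ (-(3:ℝ)/2) :=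
    rpow_le_rpow_of_nonpos hx (by linarith) (by norm_num)
  rw [show x + 1 + 1 = x + 2 by ring] at h1
  rw [abs_le]
  constructor <;> linarith

/-- `√(4π)` times the heat kernel of `∂ₜu = ∂ₓ²u` at time `t`. -/
noncomputable def gaussProfile (t z : ℝ) : ℝ := t ^ (-(1:ℝ)/2) * exp (-z ^ 2 / (4 * t))

lemma gaussProfile_mul_gaussProfile {a b : ℝ} (ha : 0 < a) (hb : 0 < b) (z : ℝ) :
    gaussProfile a z * gaussProfile b z
      = a ^ (-(1:ℝ)/2) * b ^ (-(1:ℝ)/2) * exp (-((a + b) / (4 * a * b)) * z ^ 2) := by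
  rw [gaussProfile, gaussProfile, mul_mul_mul_comm, ← exp_add]
  congr 2
  field_simp
  ring

lemma integrable_gaussProfile_mul {a b : ℝ} (ha : 0 < a) (hb : 0 < b) :
    Integrable fun z ↦ gaussProfile a z * gaussProfile b z := by
  simp_rw [gaussProfile_mul_gaussProfile ha hb]
  exact (integrable_exp_neg_mul_sq (by positivity)).const_mul _

lemma integral_gaussProfile_mul {a b : ℝ} (ha : 0 < a) (hb : 0 < b) :
    ∫ z, gaussProfile a z * gaussProfile b z = 2 * √π * (a + b) ^ (-(1:ℝ)/2) := by
  have hab : 0 < a + b := by positivity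
  simp_rw [gaussProfile_mul_gaussProfile ha hb]
  rw [integral_const_mul, integral_gaussian, rpow_neg_one_half_eq_inv_sqrt ha.le,
    rpow_neg_one_half_eq_inv_sqrt hb.le, rpow_neg_one_half_eq_inv_sqrt hab.le,
    show π / ((a + b) / (4 * a * b)) = 2 ^ 2 * π * a * b / (a + b) by field_simp; ring,
    sqrt_div' _ hab.le, sqrt_mul' _ hb.le, sqrt_mul' _ ha.le, sqrt_mul' _ pi_pos.le,
    sqrt_sq zero_le_two]
  have := sqrt_pos.mpr ha
  have := sqrt_pos.mpr hb
  have := sqrt_pos.mpr hab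
  field_simp

lemma integral_sq_gaussProfile_sub {a b : ℝ} (ha : 0 < a) (hb : 0 < b) :
    ∫ z, (gaussProfile a z - gaussProfile b z) ^ 2
      = 2 * √π * ((2 * a) ^ (-(1:ℝ)/2) - 2 * (a + b) ^ (-(1:ℝ)/2)
          + (2 * b) ^ (-(1:ℝ)/2)) := by
  have haa := integrable_gaussProfile_mul ha ha
  have hab := (integrable_gaussProfile_mul ha hb).const_mul 2
  have hbb := integrable_gaussProfile_mul hb hb
  calc ∫ z, (gaussProfile a z - gaussProfile b z) ^ 2
      = ∫ z, (gaussProfile a z * gaussProfile a z - 2 * (gaussProfile a z * gaussProfile b z)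
          + gaussProfile b z * gaussProfile b z) := by congr with z; ring
    _ = (∫ z, gaussProfile a z * gaussProfile a z)
          - 2 * (∫ z, gaussProfile a z * gaussProfile b z)
          + ∫ z, gaussProfile b z * gaussProfile b z := by
        rw [integral_add ?_ hbb, integral_sub haa hab, integral_const_mul]
        exact haa.sub hab
    _ = _ := by
        rw [integral_gaussProfile_mul ha ha, integral_gaussProfile_mul ha hb,
          integral_gaussProfile_mul hb hb, two_mul a, two_mul b]
        ring

lemma integral_sq_gaussProfile_one_add_sub {v : ℝ} (hv : 0 < v) :
    ∫ z, (gaussProfile (1 + v) z - gaussProfile v z) ^ 2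
      = 2 * √π * ((2 * v) ^ (-(1:ℝ)/2) - 2 * (2 * v + 1) ^ (-(1:ℝ)/2)
          + (2 * v + 2) ^ (-(1:ℝ)/2)) := by
  rw [integral_sq_gaussProfile_sub (by positivity) hv, show 2 * (1 + v) = 2 * v + 2 by ring,
    show 1 + v + v = 2 * v + 1 by ring]
  ring

lemma abs_integral_sq_gaussProfile_one_add_sub_le_rpow_neg_one_half {v : ℝ} (hv : 0 < v) :
    |∫ z, (gaussProfile (1 + v) z - gaussProfile v z) ^ 2| ≤ 4 * √π * v ^ (-(1:ℝ)/2) := by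
  rw [integral_sq_gaussProfile_one_add_sub hv, abs_mul, abs_of_pos (by positivity)]
  have h2v : (2 * v) ^ (-(1:ℝ)/2) ≤ v ^ (-(1:ℝ)/2) :=
    rpow_le_rpow_of_nonpos hv (by linarith) (by norm_num)
  calc 2 * √π * |_| ≤ 2 * √π * (2 * (2 * v) ^ (-(1:ℝ)/2)) := by
        gcongr; exact abs_rpow_neg_one_half_secondDiff_le (by positivity)
    _ ≤ 4 * √π * v ^ (-(1:ℝ)/2) := by nlinarith [sqrt_nonneg π]

lemma abs_integral_sq_gaussProfile_one_add_sub_le_rpow_neg_three_halves {v : ℝ} (hv : 0 < v) :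
    |∫ z, (gaussProfile (1 + v) z - gaussProfile v z) ^ 2| ≤ √π * v ^ (-(3:ℝ)/2) := by
  rw [integral_sq_gaussProfile_one_add_sub hv, abs_mul, abs_of_pos (by positivity)]
  have h2v : (2 * v) ^ (-(3:ℝ)/2) ≤ v ^ (-(3:ℝ)/2) :=
    rpow_le_rpow_of_nonpos hv (by linarith) (by norm_num)
  calc 2 * √π * |_| ≤ 2 * √π * ((2 * v) ^ (-(3:ℝ)/2) / 2) := by
        gcongr; exact abs_rpow_neg_one_half_secondDiff_le_rpow_neg_three_halves (by positivity)
    _ ≤ √π * v ^ (-(3:ℝ)/2) := by nlinarith [sqrt_nonneg π]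

/-- For `p > 4`, the scale-invariant integral
`∫₀^∞ [ ∫_ℝ ( (1+v)^{-1/2} e^{−z²/(4(1+v))} − v^{-1/2} e^{−z²/(4v)} )² dz ]^{p/(p−2)} dv`
is finite. -/
theorem stmt5 (p : ℝ) (hp : 4 < p) :
    IntegrableOn
      (fun v : ℝ =>
        (∫ z : ℝ,
            ((1 + v) ^ (-(1:ℝ)/2) * Real.exp (-z ^ 2 / (4 * (1 + v))) -
              v ^ (-(1:ℝ)/2) * Real.exp (-z ^ 2 / (4 * v))) ^ 2) ^ (p / (p - 2)))
      (Set.Ioi (0:ℝ)) := by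
  have hp2 : 0 < p - 2 := by linarith
  have hq1 : 1 < p / (p - 2) := (one_lt_div hp2).mpr (by linarith)
  have hq2 : p / (p - 2) < 2 := (div_lt_iff₀ hp2).mpr (by linarith)
  refine integrableOn_Ioi_zero_of_le_rpow (a := -(1:ℝ)/2 * (p / (p - 2)))
    (b := -(3:ℝ)/2 * (p / (p - 2))) ?_ (by linarith) (by linarith)
    (fun v hv ↦ norm_rpow_le_mul_rpow hv.1 (by linarith)
      (abs_integral_sq_gaussProfile_one_add_sub_le_rpow_neg_one_half hv.1))
    (fun v hv ↦ norm_rpow_le_mul_rpow (one_pos.trans hv) (by linarith)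
      (abs_integral_sq_gaussProfile_one_add_sub_le_rpow_neg_three_halves (one_pos.trans hv)))
  refine ((StronglyMeasurable.integral_prod_right ?_).measurable.pow_const _).aestronglyMeasurable
  exact Measurable.stronglyMeasurable (by fun_prop)
end

section
/- For p > 4 the integral ∫₀^∞ [ ∫_ℝ (1/v) ( e^{−(1+w)²/(4v)} − e^{−w²/(4v)} )² dw ]^{p/(p−2)} dv is finite. -/
/-!
Expanding the square and completing the square in the cross term turns the inner integral into
three translated Gaussian integrals, so it equals `2√(2π) v^{-1/2} (1 - e^{-1/(8v)})`. Since
`1 - e^{-x} ≤ min 1 x`, this is `O(v^{-1/2})` at `0` and `O(v^{-3/2})` at `∞`. Its power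
`q = p/(p-2)` is therefore integrable near `0` because `q < 2`, i.e. `p > 4`,
and near `∞` because `q > 2/3`.
-/

open MeasureTheory Real Set

theorem integral_exp_neg_mul_sq_add (b c : ℝ) :
    ∫ x : ℝ, exp (-b * (x + c) ^ 2) = √(π / b) := by
  rw [integral_add_right_eq_self (fun x => exp (-b * x ^ 2)) c, integral_gaussian]

theorem integral_sq_sub_exp_neg_mul_sq {b : ℝ} (hb : 0 < b) (a : ℝ) :
    ∫ x : ℝ, (exp (-b * (x + a) ^ 2) - exp (-b * x ^ 2)) ^ 2
      = 2 * √(π / (2 * b)) * (1 - exp (-(b * a ^ 2 / 2))) := by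
  have expand : ∀ x : ℝ, (exp (-b * (x + a) ^ 2) - exp (-b * x ^ 2)) ^ 2
      = exp (-(2 * b) * (x + a) ^ 2) + exp (-(2 * b) * x ^ 2)
        - 2 * exp (-(b * a ^ 2 / 2)) * exp (-(2 * b) * (x + a / 2) ^ 2) := by
    intro x
    have cross : -b * (x + a) ^ 2 + -b * x ^ 2
        = -(b * a ^ 2 / 2) + -(2 * b) * (x + a / 2) ^ 2 := by ring
    have double : ∀ u : ℝ, -(2 * b) * u ^ 2 = -b * u ^ 2 + -b * u ^ 2 := fun u => by ring
    rw [mul_assoc 2, ← exp_add, ← cross, double, double, exp_add, exp_add, exp_add]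
    ring
  have hg := integrable_exp_neg_mul_sq (by positivity : 0 < 2 * b)
  have hsum : Integrable (fun x : ℝ => exp (-(2 * b) * (x + a) ^ 2) + exp (-(2 * b) * x ^ 2)) :=
    (hg.comp_add_right a).add hg
  simp only [expand]
  rw [integral_sub hsum ((hg.comp_add_right (a / 2)).const_mul _),
    integral_add (hg.comp_add_right a) hg, integral_const_mul, integral_exp_neg_mul_sq_add,
    integral_exp_neg_mul_sq_add, integral_gaussian]
  ring

theorem integral_sq_sub_heatKernel (a : ℝ) {v : ℝ} (hv : 0 < v) :
    ∫ w : ℝ, (1 / v) * (exp (-(a + w) ^ 2 / (4 * v)) - exp (-w ^ 2 / (4 * v))) ^ 2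
      = 2 * √(2 * π) * v ^ (-(1 / 2) : ℝ) * (1 - exp (-(a ^ 2 / 8) / v)) := by
  have h := integral_sq_sub_exp_neg_mul_sq (b := (4 * v)⁻¹) (by positivity) a
  have hexp : ∀ u : ℝ, -u ^ 2 / (4 * v) = -(4 * v)⁻¹ * u ^ 2 := fun u => by ring
  simp only [hexp, add_comm a, integral_const_mul, h]
  have hsqrt : √(π / (2 * (4 * v)⁻¹)) = √(2 * π) * v ^ (1 / 2 : ℝ) := by
    rw [← sqrt_eq_rpow, ← sqrt_mul (by positivity)]
    congr 1
    field_simp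
    norm_num
  rw [hsqrt, show -(1 / 2 : ℝ) = 1 / 2 - 1 by norm_num, rpow_sub_one hv.ne',
    show -((4 * v)⁻¹ * a ^ 2 / 2) = -(a ^ 2 / 8) / v by field_simp; ring]
  ring

theorem integrableOn_Ioi_zero_of_le_rpow_s6 {f : ℝ → ℝ} {s t C D : ℝ}
    (hf : AEStronglyMeasurable f (volume.restrict (Ioi 0))) (hs : -1 < s) (ht : t < -1)
    (h0 : ∀ v ∈ Ioc (0 : ℝ) 1, ‖f v‖ ≤ C * v ^ s)
    (h1 : ∀ v ∈ Ioi (1 : ℝ), ‖f v‖ ≤ D * v ^ t) :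
    IntegrableOn f (Ioi 0) := by
  rw [← Ioc_union_Ioi_eq_Ioi zero_le_one]
  refine IntegrableOn.union ?_ ?_
  · have hpow : IntegrableOn (fun v : ℝ => v ^ s) (Ioc 0 1) := by
      rw [← intervalIntegrable_iff_integrableOn_Ioc_of_le zero_le_one]
      exact intervalIntegral.intervalIntegrable_rpow' hs
    exact (hpow.const_mul C).mono'
      (hf.mono_measure (Measure.restrict_mono Ioc_subset_Ioi_self le_rfl))
      (ae_restrict_of_forall_mem measurableSet_Ioc h0)
  · exact ((integrableOn_Ioi_rpow_of_lt ht one_pos).const_mul D).mono'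
      (hf.mono_measure (Measure.restrict_mono (Ioi_subset_Ioi zero_le_one) le_rfl))
      (ae_restrict_of_forall_mem measurableSet_Ioi h1)

theorem integrableOn_rpow_mul_rpow_mul_one_sub_exp_neg_div {k c q : ℝ} (hk : 0 ≤ k)
    (hc : 0 ≤ c) (hq : 2 / 3 < q) (hq' : q < 2) :
    IntegrableOn (fun v : ℝ => (k * v ^ (-(1 / 2) : ℝ) * (1 - exp (-c / v))) ^ q) (Ioi 0) := by
  have rpow_bound : ∀ {v x b r : ℝ}, 0 < v → 0 ≤ x → 0 ≤ b → x ≤ b * v ^ r →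
      ‖x ^ q‖ ≤ b ^ q * v ^ (r * q) := by
    intro v x b r hv hx hb hxb
    rw [norm_of_nonneg (rpow_nonneg hx q), rpow_mul hv.le, ← mul_rpow hb (rpow_nonneg hv.le r)]
    exact rpow_le_rpow hx hxb (by linarith)
  have one_sub_exp_nonneg : ∀ {v : ℝ}, 0 < v → 0 ≤ 1 - exp (-c / v) := by
    intro v hv
    have : -c / v ≤ 0 := div_nonpos_of_nonpos_of_nonneg (by linarith) hv.le
    linarith [exp_le_one_iff.2 this]
  have profile_nonneg : ∀ {v : ℝ}, 0 < v →
      0 ≤ k * v ^ (-(1 / 2) : ℝ) * (1 - exp (-c / v)) :=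
    fun hv => mul_nonneg (mul_nonneg hk (rpow_nonneg hv.le _)) (one_sub_exp_nonneg hv)
  refine integrableOn_Ioi_zero_of_le_rpow_s6 (C := k ^ q) (D := (k * c) ^ q)
    (s := -(1 / 2) * q) (t := -(3 / 2) * q) (Measurable.aestronglyMeasurable (by fun_prop))
    (by nlinarith) (by nlinarith) (fun v hv => ?_) (fun v hv => ?_)
  · refine rpow_bound hv.1 (profile_nonneg hv.1) hk ?_
    exact mul_le_of_le_one_right (mul_nonneg hk (rpow_nonneg hv.1.le _))
      (by linarith [exp_pos (-c / v)])
  · have hv0 : 0 < v := zero_lt_one.trans hv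
    refine rpow_bound hv0 (profile_nonneg hv0) (mul_nonneg hk hc) ?_
    have : 1 - exp (-c / v) ≤ c / v := by
      linarith [neg_div v c ▸ one_sub_le_exp_neg (c / v)]
    calc k * v ^ (-(1 / 2) : ℝ) * (1 - exp (-c / v)) ≤ k * v ^ (-(1 / 2) : ℝ) * (c / v) :=
          mul_le_mul_of_nonneg_left this (mul_nonneg hk (rpow_nonneg hv0.le _))
      _ = k * c * v ^ (-(3 / 2) : ℝ) := by
          rw [show -(3 / 2 : ℝ) = -(1 / 2) - 1 by norm_num, rpow_sub_one hv0.ne']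
          ring

/-- For `p > 4`, the scale-invariant integral
`∫₀^∞ [ ∫_ℝ (1/v) ( e^{−(1+w)²/(4v)} − e^{−w²/(4v)} )² dw ]^{p/(p−2)} dv` is finite. -/
theorem stmt6 (p : ℝ) (hp : 4 < p) :
    IntegrableOn
      (fun v : ℝ =>
        (∫ w : ℝ,
            (1 / v) * (Real.exp (-(1 + w) ^ 2 / (4 * v)) -
              Real.exp (-w ^ 2 / (4 * v))) ^ 2) ^ (p / (p - 2)))
      (Set.Ioi (0:ℝ)) := by
  have hp2 : 0 < p - 2 := by linarith
  have hq : 2 / 3 < p / (p - 2) := by rw [lt_div_iff₀ hp2]; linarith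
  have hq' : p / (p - 2) < 2 := by rw [div_lt_iff₀ hp2]; linarith
  refine (integrableOn_rpow_mul_rpow_mul_one_sub_exp_neg_div (k := 2 * √(2 * π))
    (c := 1 ^ 2 / 8) (by positivity) (by positivity) hq hq').congr_fun (fun v hv => ?_)
    measurableSet_Ioi
  rw [integral_sq_sub_heatKernel 1 hv]
end
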